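/- Let (M,𝒞) be a complex Cartan space whose Chern–Cartan connection coefficients H_{jk}^i depend only on z (Berwald-Cartan), so N_{jk} = ∑_i H_{jk}^i(z)ζ_i, and suppose the weakly Kähler condition ∑_{j}(N_{jk} - N_{kj})ζ^j = 0 holds, where ζ^j = ∑_m h^{m̄j}ζ̄_m. Then N_{jk} = N_{kj}, i.e. the space is Kähler–Cartan. -/

import Mathlib

open scoped BigOperators
open Complex

/-- Wirtinger derivative ∂/∂ζ_k of a (real-)smooth function on ℂⁿ. -/
noncomputable def wD {n : ℕ} (F : (Fin n → ℂ) → ℂ) (ζ : Fin n → ℂ) (k : Fin n) : ℂ :=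
  (fderiv ℝ F ζ (Pi.single k 1) - Complex.I * fderiv ℝ F ζ (Pi.single k Complex.I)) / 2

/-- Conjugate Wirtinger derivative ∂/∂ζ̄_k. -/
noncomputable def wDbar {n : ℕ} (F : (Fin n → ℂ) → ℂ) (ζ : Fin n → ℂ) (k : Fin n) : ℂ :=
  (fderiv ℝ F ζ (Pi.single k 1) + Complex.I * fderiv ℝ F ζ (Pi.single k Complex.I)) / 2


open scoped BigOperators
open Complex

-- auxiliary: fderiv of a linear form ζ ↦ ∑ c i * ζ i
lemma fderiv_linform {n : ℕ} (c : Fin n → ℂ) (ζ v : Fin n → ℂ) :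
    fderiv ℝ (fun ζ' : Fin n → ℂ => ∑ i, c i * ζ' i) ζ v = ∑ i, c i * v i := by
  have hd : ∀ i : Fin n, DifferentiableAt ℝ (fun ζ' : Fin n → ℂ => c i * ζ' i) ζ := by
    intro i
    exact ((ContinuousLinearMap.proj i : (Fin n → ℂ) →L[ℝ] ℂ).differentiable.differentiableAt).const_mul _
  rw [fderiv_fun_sum (fun i _ => hd i)]
  rw [ContinuousLinearMap.sum_apply]
  refine Finset.sum_congr rfl fun i _ => ?_
  have hp : HasFDerivAt (fun ζ' : Fin n → ℂ => c i * ζ' i)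
      ((c i) • (ContinuousLinearMap.proj i : (Fin n → ℂ) →L[ℝ] ℂ)) ζ :=
    ((ContinuousLinearMap.proj i : (Fin n → ℂ) →L[ℝ] ℂ).hasFDerivAt).const_mul (c i)
  rw [hp.fderiv]
  simp [smul_eq_mul]

lemma diffAt_linform {n : ℕ} (c : Fin n → ℂ) (ζ : Fin n → ℂ) :
    DifferentiableAt ℝ (fun ζ' : Fin n → ℂ => ∑ i, c i * ζ' i) ζ := by
  exact DifferentiableAt.fun_sum fun i _ =>
    ((ContinuousLinearMap.proj i : (Fin n → ℂ) →L[ℝ] ℂ).differentiable.differentiableAt).const_mul _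

/-- A strongly Berwald-Cartan space is Kähler–Cartan: if N_{jk} = ∑_i H_{jk}^i(z) ζ_i with
coefficients independent of ζ, ζ^j = ∑_m h^{m̄j} ζ̄_m with ∂ζ^j/∂ζ̄_m = h^{m̄j} and h
invertible at each ζ ≠ 0, then the weakly Kähler condition ∑_j (N_{jk}-N_{kj})ζ^j = 0 implies
N_{jk} = N_{kj}. -/
theorem strongly_berwald_cartan_is_kahler (n : ℕ)
    (Hc : Fin n → Fin n → Fin n → ℂ)              -- Hc j k i = H_{jk}^i(z), z fixed
    (h : (Fin n → ℂ) → Matrix (Fin n) (Fin n) ℂ)  -- h ζ m j = h^{m̄j}(z,ζ)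
    (N : Fin n → Fin n → (Fin n → ℂ) → ℂ)
    (zup : Fin n → (Fin n → ℂ) → ℂ)
    (hsmh : ∀ m j : Fin n, ContDiffOn ℝ (⊤ : ℕ∞) (fun ζ => h ζ m j) {ζ : Fin n → ℂ | ζ ≠ 0})
    (hN : ∀ j k : Fin n, ∀ ζ, N j k ζ = ∑ i, Hc j k i * ζ i)
    (hzup : ∀ j : Fin n, ∀ ζ, zup j ζ = ∑ m, h ζ m j * (starRingEnd ℂ) (ζ m))
    (hdzup : ∀ ζ : Fin n → ℂ, ζ ≠ 0 → ∀ j m : Fin n, wDbar (zup j) ζ m = h ζ m j)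
    (hinv : ∀ ζ : Fin n → ℂ, ζ ≠ 0 → IsUnit (h ζ))
    (hwk : ∀ ζ : Fin n → ℂ, ζ ≠ 0 → ∀ k : Fin n,
        ∑ j, (N j k ζ - N k j ζ) * zup j ζ = 0) :
    ∀ ζ : Fin n → ℂ, ζ ≠ 0 → ∀ j k : Fin n, N j k ζ = N k j ζ := by
  intro ζ hζ j k
  have hU : IsOpen {ζ : Fin n → ℂ | ζ ≠ 0} := isOpen_compl_singleton
  -- the antisymmetric part, as a function of ζ
  set A : Fin n → (Fin n → ℂ) → ℂ := fun j' ζ' => N j' k ζ' - N k j' ζ' with hAdef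
  have hAlin : ∀ j', A j' = fun ζ' => ∑ i, (Hc j' k i - Hc k j' i) * ζ' i := by
    intro j'; funext ζ'
    simp only [hAdef, hN, sub_mul, Finset.sum_sub_distrib]
  -- differentiability of zup at ζ
  have hdz : ∀ j', DifferentiableAt ℝ (zup j') ζ := by
    intro j'
    have hzf : zup j' = fun ζ' => ∑ m, h ζ' m j' * (starRingEnd ℂ) (ζ' m) :=
      funext (hzup j')
    rw [hzf]
    refine DifferentiableAt.fun_sum fun m _ => DifferentiableAt.mul ?_ ?_
    · exact (((hsmh m j').contDiffAt (hU.mem_nhds hζ)).differentiableAt (by simp))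
    · exact Complex.conjCLE.differentiableAt.comp ζ
        ((ContinuousLinearMap.proj m : (Fin n → ℂ) →L[ℝ] ℂ).differentiable.differentiableAt)
  have hdA : ∀ j', DifferentiableAt ℝ (A j') ζ := by
    intro j'; rw [hAlin]; exact diffAt_linform _ ζ
  -- the weakly Kähler function vanishes near ζ
  set F : (Fin n → ℂ) → ℂ := fun ζ' => ∑ j', A j' ζ' * zup j' ζ' with hFdef
  have hF0 : fderiv ℝ F ζ = 0 := by
    have heq : F =ᶠ[nhds ζ] (fun _ => (0 : ℂ)) := by
      filter_upwards [hU.mem_nhds hζ] with ζ' hζ'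
      exact hwk ζ' hζ' k
    rw [heq.fderiv_eq, fderiv_fun_const]
    rfl
  -- compute the fderiv via product rule
  have hDF : ∀ v : Fin n → ℂ, (0 : ℂ) =
      ∑ j', (A j' ζ * fderiv ℝ (zup j') ζ v + zup j' ζ * fderiv ℝ (A j') ζ v) := by
    intro v
    have h1 : fderiv ℝ F ζ v =
        ∑ j', (A j' ζ * fderiv ℝ (zup j') ζ v + zup j' ζ * fderiv ℝ (A j') ζ v) := by
      rw [hFdef]
      rw [fderiv_fun_sum (fun j' _ => (hdA j').fun_mul (hdz j'))]
      rw [ContinuousLinearMap.sum_apply]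
      refine Finset.sum_congr rfl fun j' _ => ?_
      rw [fderiv_fun_mul (hdA j') (hdz j')]
      simp [smul_eq_mul, mul_comm]
    rw [← h1, hF0]; rfl
  -- wDbar of A j' is zero
  have hwA : ∀ j' m, fderiv ℝ (A j') ζ (Pi.single m 1)
      + Complex.I * fderiv ℝ (A j') ζ (Pi.single m Complex.I) = 0 := by
    intro j' m
    rw [hAlin, fderiv_linform, fderiv_linform]
    have e1 : ∑ i, (Hc j' k i - Hc k j' i) * (Pi.single m (1:ℂ) : Fin n → ℂ) i
        = Hc j' k m - Hc k j' m := by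
      rw [Finset.sum_eq_single m]
      · simp
      · intro b _ hb; simp [Pi.single_eq_of_ne hb]
      · simp
    have e2 : ∑ i, (Hc j' k i - Hc k j' i) * (Pi.single m Complex.I : Fin n → ℂ) i
        = (Hc j' k m - Hc k j' m) * Complex.I := by
      rw [Finset.sum_eq_single m]
      · simp
      · intro b _ hb; simp [Pi.single_eq_of_ne hb]
      · simp
    rw [e1, e2]
    ring_nf
    rw [Complex.I_sq]
    ring
  -- key identity: ∑ j', h ζ m j' * A j' ζ = 0 for each m
  have hkey : ∀ m, ∑ j', h ζ m j' * A j' ζ = 0 := by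
    intro m
    have c1 := hDF (Pi.single m 1)
    have c2 := hDF (Pi.single m Complex.I)
    have comb : (0:ℂ) = ∑ j', (A j' ζ * (fderiv ℝ (zup j') ζ (Pi.single m 1)
          + Complex.I * fderiv ℝ (zup j') ζ (Pi.single m Complex.I))
        + zup j' ζ * (fderiv ℝ (A j') ζ (Pi.single m 1)
          + Complex.I * fderiv ℝ (A j') ζ (Pi.single m Complex.I))) := by
      calc (0:ℂ) = (∑ j', (A j' ζ * fderiv ℝ (zup j') ζ (Pi.single m 1)
              + zup j' ζ * fderiv ℝ (A j') ζ (Pi.single m 1)))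
          + Complex.I * ∑ j', (A j' ζ * fderiv ℝ (zup j') ζ (Pi.single m Complex.I)
              + zup j' ζ * fderiv ℝ (A j') ζ (Pi.single m Complex.I)) := by
            rw [← c1, ← c2]; ring
        _ = _ := by rw [Finset.mul_sum, ← Finset.sum_add_distrib]
                    refine Finset.sum_congr rfl fun j' _ => ?_; ring
    have comb2 : (0:ℂ) = ∑ j', A j' ζ * (2 * h ζ m j') := by
      rw [comb]
      refine Finset.sum_congr rfl fun j' _ => ?_
      rw [hwA j' m, mul_zero, add_zero]
      have := hdzup ζ hζ j' m
      rw [wDbar] at this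
      have h2 : fderiv ℝ (zup j') ζ (Pi.single m 1)
          + Complex.I * fderiv ℝ (zup j') ζ (Pi.single m Complex.I) = 2 * h ζ m j' := by
        field_simp at this
        linear_combination this
      rw [h2]
    have : ∑ j', h ζ m j' * A j' ζ = (1/2 : ℂ) * ∑ j', A j' ζ * (2 * h ζ m j') := by
      rw [Finset.mul_sum]; refine Finset.sum_congr rfl fun j' _ => ?_; ring
    rw [this, ← comb2, mul_zero]
  -- invert the matrix
  have hmv : Matrix.mulVec (h ζ) (fun j' => A j' ζ) = 0 := by
    funext m
    simpa [Matrix.mulVec, dotProduct] using hkey m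
  have hinj := Matrix.mulVec_injective_iff_isUnit.mpr (hinv ζ hζ)
  have hzero : (fun j' => A j' ζ) = 0 := by
    apply hinj
    rw [hmv, Matrix.mulVec_zero]
  have := congrFun hzero j
  simp only [hAdef, Pi.zero_apply, sub_eq_zero] at this
  exact this
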